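/- Let K = ℚ(ζ₇ + ζ₇⁻¹) = ℚ(2cos(2π/7)) ⊆ ℝ, the maximal real subfield of the 7-th cyclotomic field, and let α₀ = 2cos(2π/7) ∈ K. For every prime number p, consider the quaternion algebra B = ( α₀, p / K ) over K, i.e., the K-algebra with basis 1, i, j, ij satisfying i² = α₀, j² = p, and ji = −ij. Then there exists an element c ∈ B with c ∉ K·1 such that c² = s·1 for some s ∈ K, and s is totally negative: all three field embeddings σ : K → ℝ satisfy σ(s) < 0. -/

import Mathlib

open Quaternion Real

/-!
For `x ∈ K` the element `c = x i + ij` satisfies `c² = α₀ (x² - p)`. Take `x = m (α₀ - 1)` with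
`p < m² ≤ 4p`. The real embeddings send `α₀` to the three roots `r ≈ 1.247, -0.445, -1.802` of
`X³ + X² - 2X - 1`. At the positive root `(r - 1)² < 1/16`, so `m² (r - 1)² - p < 0`; at the
negative roots `(r - 1)² ≥ 49/25 > 1`, so `m² (r - 1)² - p > 0`. Either way `r (m² (r - 1)² - p) < 0`.
-/

/-- The maximal real subfield `K = ℚ(2 cos (2π/7))` of the 7-th cyclotomic field,
realized inside `ℝ`. -/
noncomputable def Kcos7 : IntermediateField ℚ ℝ :=
  IntermediateField.adjoin ℚ {2 * Real.cos (2 * π / 7)}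

/-- The element `α₀ = 2 cos (2π/7)` of `K = ℚ(2 cos (2π/7))`. -/
noncomputable def alpha0 : Kcos7 :=
  ⟨2 * Real.cos (2 * π / 7), IntermediateField.subset_adjoin ℚ _ (Set.mem_singleton _)⟩

namespace QuaternionAlgebra

variable {R : Type*} [CommRing R] {a b : R}

theorem mk_zero_imI_zero_imK_sq (x y : R) :
    (⟨0, x, 0, y⟩ : ℍ[R,a,b]) ^ 2 = algebraMap R ℍ[R,a,b] (a * (x ^ 2 - b * y ^ 2)) := by
  ext <;> simp [sq, algebraMap_eq] <;> ring

theorem mk_notMem_range_algebraMap (r x y : R) {z : R} (hz : z ≠ 0) :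
    (⟨r, x, y, z⟩ : ℍ[R,a,b]) ∉ Set.range (algebraMap R ℍ[R,a,b]) := by
  rintro ⟨w, hw⟩
  exact hz (congrArg imK hw).symm

end QuaternionAlgebra

theorem two_cos_two_pi_div_seven_cubic :
    (2 * cos (2 * π / 7)) ^ 3 + (2 * cos (2 * π / 7)) ^ 2 - 2 * (2 * cos (2 * π / 7)) - 1 = 0 := by
  generalize hθ : 2 * π / 7 = θ
  have hθ0 : 0 < θ := hθ ▸ by positivity
  -- `7θ = 2π` gives `cos 4θ = cos 3θ`, a quartic in `cos θ` with the spurious root `1`.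
  have h43 : cos (4 * θ) = cos (3 * θ) := by
    rw [show 4 * θ = 2 * π - 3 * θ by linarith, cos_two_pi_sub]
  have hne : cos θ ≠ 1 := by
    rw [Ne, cos_eq_one_iff_of_lt_of_lt (by linarith) (by linarith [pi_pos])]
    exact hθ0.ne'
  rw [show 4 * θ = 2 * (2 * θ) by ring, cos_two_mul, cos_two_mul, cos_three_mul] at h43
  have : (cos θ - 1) * ((2 * cos θ) ^ 3 + (2 * cos θ) ^ 2 - 2 * (2 * cos θ) - 1) = 0 := by
    linear_combination h43
  exact (mul_eq_zero.mp this).resolve_left (sub_ne_zero.mpr hne)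

theorem alpha0_cubic : alpha0 ^ 3 + alpha0 ^ 2 - 2 * alpha0 - 1 = 0 :=
  Subtype.ext two_cos_two_pi_div_seven_cubic

theorem map_alpha0_cubic (σ : Kcos7 →+* ℝ) :
    σ alpha0 ^ 3 + σ alpha0 ^ 2 - 2 * σ alpha0 - 1 = 0 := by
  simpa [map_ofNat] using congrArg σ alpha0_cubic

theorem cubic_root_pos_or_neg {r : ℝ} (hr : r ^ 3 + r ^ 2 - 2 * r - 1 = 0) :
    (0 < r ∧ (r - 1) ^ 2 < 1 / 16) ∨ (r < 0 ∧ 49 / 25 ≤ (r - 1) ^ 2) := by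
  rcases lt_trichotomy r 0 with hneg | rfl | hpos
  · have : r ≤ -2 / 5 := by nlinarith [sq_nonneg (r + 1), sq_nonneg (5 * r + 1)]
    exact .inr ⟨hneg, by nlinarith⟩
  · norm_num at hr
  · have h1 : 1 < r := by nlinarith
    have h2 : r < 5 / 4 := by nlinarith
    exact .inl ⟨hpos, by nlinarith⟩

theorem cubic_root_mul_sq_sub_neg {r q p : ℝ} (hr : r ^ 3 + r ^ 2 - 2 * r - 1 = 0)
    (hpq : p < q ^ 2) (hqp : q ^ 2 ≤ 4 * p) : r * ((q * (r - 1)) ^ 2 - p) < 0 := by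
  rcases cubic_root_pos_or_neg hr with ⟨hpos, hlt⟩ | ⟨hneg, hge⟩
  · exact mul_neg_of_pos_of_neg hpos (by nlinarith)
  · exact mul_neg_of_neg_of_pos hneg (by nlinarith)

theorem Nat.exists_lt_sq_le_four_mul {p : ℕ} (hp : 0 < p) :
    ∃ m : ℕ, p < m ^ 2 ∧ m ^ 2 ≤ 4 * p := by
  refine ⟨p.sqrt + 1, by simpa [sq] using p.lt_succ_sqrt, ?_⟩
  have : 1 ≤ p.sqrt := Nat.le_sqrt.mpr hp
  nlinarith [p.sqrt_le']

/-- In the quaternion algebra `B = (α₀, p / ℚ(2 cos (2π/7)))` (with `i² = α₀`, `j² = p`,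
`ji = -ij`), there exists an element `c ∉ K·1` whose square is a totally negative scalar
`s ∈ K`. -/
theorem exists_totally_negative_square_cos7 (p : ℕ) (hp : p.Prime) :
    ∃ c : ℍ[Kcos7, alpha0, (p : Kcos7)],
      c ∉ Set.range (algebraMap Kcos7 ℍ[Kcos7, alpha0, (p : Kcos7)]) ∧
      ∃ s : Kcos7, c ^ 2 = algebraMap Kcos7 ℍ[Kcos7, alpha0, (p : Kcos7)] s ∧
        ∀ σ : Kcos7 →+* ℝ, σ s < 0 := by
  obtain ⟨m, hpm, hmp⟩ := Nat.exists_lt_sq_le_four_mul hp.pos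
  set x : Kcos7 := m * (alpha0 - 1)
  refine ⟨⟨0, x, 0, 1⟩, QuaternionAlgebra.mk_notMem_range_algebraMap _ _ _ one_ne_zero,
    alpha0 * (x ^ 2 - p), by simpa using QuaternionAlgebra.mk_zero_imI_zero_imK_sq x 1, ?_⟩
  intro σ
  have hσ : σ (alpha0 * (x ^ 2 - p)) = σ alpha0 * ((m * (σ alpha0 - 1)) ^ 2 - p) := by
    simp [x]
  rw [hσ]
  exact cubic_root_mul_sq_sub_neg (map_alpha0_cubic σ) (by exact_mod_cast hpm)
    (by exact_mod_cast hmp)
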